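/- Let A be a real vector space with a modular ρ satisfying the Δ₂-condition such that A_ρ is complete, let P be a cone in A_ρ that is normal with normal constant c > 0, and define σ(x) = inf_{y ≼ x} ρ(y) + inf_{x ≼ z} ρ(z) for x ∈ A_ρ. Then the cone P is normal with respect to σ with normal constant 1: if 0 ≼ x ≼ u, then σ(x) ≤ σ(u); indeed, for 0 ≼ x one has σ(x) = inf_{x ≼ z} ρ(z). -/

import Mathlib

open Filter Topology

/-- `ρ` is a modular on the real vector space `A`. -/
def IsModular {A : Type*} [AddCommGroup A] [Module ℝ A] (ρ : A → ℝ) : Prop :=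
  (∀ x : A, ρ x = 0 ↔ x = 0) ∧ (∀ x : A, ρ (-x) = ρ x) ∧
  ∀ (x y : A) (a b : ℝ), 0 ≤ a → 0 ≤ b → a + b = 1 → ρ (a • x + b • y) ≤ ρ x + ρ y

/-- The Δ₂-condition for `ρ` with constant `k`. -/
def SatisfiesDelta2 {A : Type*} [AddCommGroup A] [Module ℝ A] (ρ : A → ℝ) (k : ℝ) : Prop :=
  0 < k ∧ ∀ x : A, ρ ((2 : ℝ) • x) ≤ k * ρ x

/-- Every vector of `A` lies in the modular space `A_ρ`, i.e. `ρ (α • x) → 0` as `α → 0`. -/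
def IsModularSpace {A : Type*} [AddCommGroup A] [Module ℝ A] (ρ : A → ℝ) : Prop :=
  ∀ x : A, Tendsto (fun t : ℝ => ρ (t • x)) (𝓝 0) (𝓝 0)

/-- `A_ρ` is ρ-complete: every ρ-Cauchy sequence ρ-converges. -/
def RhoComplete {A : Type*} [AddCommGroup A] [Module ℝ A] (ρ : A → ℝ) : Prop :=
  ∀ u : ℕ → A,
    (∀ ε > (0 : ℝ), ∃ N : ℕ, ∀ m ≥ N, ∀ n ≥ N, ρ (u m - u n) < ε) →
    ∃ x : A, Tendsto (fun n => ρ (u n - x)) atTop (𝓝 0)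

/-- A set is ρ-closed if it contains limits of its ρ-convergent sequences. -/
def RhoClosed {A : Type*} [AddCommGroup A] [Module ℝ A] (ρ : A → ℝ) (S : Set A) : Prop :=
  ∀ (u : ℕ → A) (x : A), (∀ n, u n ∈ S) →
    Tendsto (fun n => ρ (u n - x)) atTop (𝓝 0) → x ∈ S

/-- `P` is a cone in `A_ρ`. -/
def IsCone {A : Type*} [AddCommGroup A] [Module ℝ A] (ρ : A → ℝ) (P : Set A) : Prop :=
  RhoClosed ρ P ∧ P.Nonempty ∧ P ≠ {0} ∧
  (∀ (a b : ℝ), 0 ≤ a → 0 ≤ b → ∀ x ∈ P, ∀ y ∈ P, a • x + b • y ∈ P) ∧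
  (∀ x : A, x ∈ P → -x ∈ P → x = 0)

/-- The partial order induced by the cone `P`: `x ≼ y` iff `y - x ∈ P`. -/
def coneLE {A : Type*} [AddCommGroup A] [Module ℝ A] (P : Set A) (x y : A) : Prop :=
  y - x ∈ P

/-- `P` is normal with normal constant `c`: `0 ≼ x ≼ y` implies `ρ x ≤ c * ρ y`. -/
def IsNormalCone {A : Type*} [AddCommGroup A] [Module ℝ A]
    (ρ : A → ℝ) (P : Set A) (c : ℝ) : Prop :=
  ∀ x y : A, x ∈ P → coneLE P x y → ρ x ≤ c * ρ y

/-- The modular `σ(x) = inf_{y ≼ x} ρ(y) + inf_{x ≼ z} ρ(z)`. -/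
noncomputable def sigmaModular {A : Type*} [AddCommGroup A] [Module ℝ A]
    (ρ : A → ℝ) (P : Set A) (x : A) : ℝ :=
  sInf (ρ '' {y | coneLE P y x}) + sInf (ρ '' {z | coneLE P x z})

/-! For `0 ≼ x` the lower infimum in `σ(x)` is attained at `y = 0`, where `ρ` vanishes, so `σ(x)`
is the upper infimum alone. If moreover `x ≼ u`, every upper bound of `u` is one of `x`, so the
upper infimum of `x` is at most that of `u`, which is at most `σ(u)` because `ρ ≥ 0`. -/

section

variable {A : Type*} [AddCommGroup A] [Module ℝ A] {ρ : A → ℝ} {P : Set A}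

theorem IsModular.map_zero (hρ : IsModular ρ) : ρ 0 = 0 :=
  (hρ.1 0).2 rfl

theorem IsModular.nonneg (hρ : IsModular ρ) (x : A) : 0 ≤ ρ x := by
  have h := hρ.2.2 x x (1 / 2) (1 / 2) (by norm_num) (by norm_num) (by norm_num)
  rw [← add_smul, show (1 / 2 + 1 / 2 : ℝ) = 1 by norm_num, one_smul] at h
  linarith

theorem IsModular.bddBelow_image (hρ : IsModular ρ) (S : Set A) : BddBelow (ρ '' S) :=
  ⟨0, by rintro _ ⟨y, -, rfl⟩; exact hρ.nonneg y⟩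

theorem IsModular.sInf_image_nonneg (hρ : IsModular ρ) (S : Set A) : 0 ≤ sInf (ρ '' S) :=
  Real.sInf_nonneg (by rintro _ ⟨y, -, rfl⟩; exact hρ.nonneg y)

theorem IsModular.sInf_image_eq_zero (hρ : IsModular ρ) {S : Set A} (h0 : (0 : A) ∈ S) :
    sInf (ρ '' S) = 0 :=
  le_antisymm (hρ.map_zero ▸ csInf_le (hρ.bddBelow_image S)
    (Set.mem_image_of_mem ρ h0)) (hρ.sInf_image_nonneg S)

theorem IsCone.add_mem (hP : IsCone ρ P) {x y : A} (hx : x ∈ P) (hy : y ∈ P) : x + y ∈ P := by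
  simpa using hP.2.2.2.1 1 1 zero_le_one zero_le_one x hx y hy

theorem IsCone.zero_mem (hP : IsCone ρ P) : (0 : A) ∈ P := by
  obtain ⟨x, hx⟩ := hP.2.1
  simpa using hP.2.2.2.1 0 0 le_rfl le_rfl x hx x hx

theorem coneLE_zero_left {x : A} : coneLE P 0 x ↔ x ∈ P := by
  rw [coneLE, sub_zero]

theorem IsCone.coneLE_refl (hP : IsCone ρ P) (x : A) : coneLE P x x := by
  rw [coneLE, sub_self]
  exact hP.zero_mem

theorem IsCone.coneLE_trans (hP : IsCone ρ P) {x y z : A} (hxy : coneLE P x y)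
    (hyz : coneLE P y z) : coneLE P x z := by
  simpa [coneLE] using hP.add_mem hyz hxy

theorem sigmaModular_of_mem (hρ : IsModular ρ) {x : A} (hx : x ∈ P) :
    sigmaModular ρ P x = sInf (ρ '' {z | coneLE P x z}) := by
  rw [sigmaModular, hρ.sInf_image_eq_zero (coneLE_zero_left.2 hx), zero_add]

theorem sInf_image_upperBounds_mono (hρ : IsModular ρ) (hP : IsCone ρ P) {x u : A}
    (hxu : coneLE P x u) :
    sInf (ρ '' {z | coneLE P x z}) ≤ sInf (ρ '' {z | coneLE P u z}) :=
  csInf_le_csInf (hρ.bddBelow_image _)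
    ⟨ρ u, u, hP.coneLE_refl u, rfl⟩
    (Set.image_mono fun _ huz => hP.coneLE_trans hxu huz)

theorem sInf_image_upperBounds_le_sigmaModular (hρ : IsModular ρ) (u : A) :
    sInf (ρ '' {z | coneLE P u z}) ≤ sigmaModular ρ P u :=
  le_add_of_nonneg_left (hρ.sInf_image_nonneg _)

end

theorem sigma_normal_constant_one_general
    {A : Type*} [AddCommGroup A] [Module ℝ A] (ρ : A → ℝ)
    (hmod : IsModular ρ)
    (P : Set A) (hP : IsCone ρ P) :
    (∀ x : A, x ∈ P → sigmaModular ρ P x = sInf (ρ '' {z | coneLE P x z})) ∧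
    (∀ x u : A, x ∈ P → coneLE P x u → sigmaModular ρ P x ≤ sigmaModular ρ P u) := by
  refine ⟨fun x hx => sigmaModular_of_mem hmod hx, fun x u hx hxu => ?_⟩
  rw [sigmaModular_of_mem hmod hx]
  exact (sInf_image_upperBounds_mono hmod hP hxu).trans
    (sInf_image_upperBounds_le_sigmaModular hmod u)

/-- The cone `P` is normal with respect to `σ` with normal constant `1`;
indeed, for `0 ≼ x`, `σ(x) = inf_{x ≼ z} ρ(z)`. -/
theorem sigma_normal_constant_one
    {A : Type*} [AddCommGroup A] [Module ℝ A] (ρ : A → ℝ)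
    (hmod : IsModular ρ) (hΔ₂ : ∃ k : ℝ, SatisfiesDelta2 ρ k)
    (hms : IsModularSpace ρ) (hcomplete : RhoComplete ρ)
    (P : Set A) (hP : IsCone ρ P)
    (c : ℝ) (hc : 0 < c) (hnormal : IsNormalCone ρ P c) :
    (∀ x : A, x ∈ P → sigmaModular ρ P x = sInf (ρ '' {z | coneLE P x z})) ∧
    (∀ x u : A, x ∈ P → coneLE P x u → sigmaModular ρ P x ≤ sigmaModular ρ P u) :=
  sigma_normal_constant_one_general ρ hmod P hP
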